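/- Let Z₁, …, Z_n be i.i.d. random variables with common distribution G on a measurable space 𝒵, let ξ : 𝒵 → ℝ be measurable with mean m := E_G[ξ] and variance σ² := Var_G(ξ) ∈ (0,∞), and let Δ := sup_{t ∈ ℝ} |P((∑ᵢ ξ(Zᵢ) − n·m)/(√n·σ) ≤ t) − Φ(t)|. Let σ̂ ≥ 0 and B be random variables defined on the same probability space, and let z ≥ 0, η ≥ 0, γ ≥ 0 be real numbers. Then |P(∑_{i=1}^n ξ(Zᵢ) + n·B > √n·z·σ̂) − (1 − Φ(z))| ≤ Δ + P(|σ̂ − σ| > η·σ) + P(√n·|B + m| > γ·σ) + (η·z + γ)/√(2π). -/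

import Mathlib

open MeasureTheory Real ProbabilityTheory

noncomputable def Phi (t : ℝ) : ℝ :=
  (Real.sqrt (2 * Real.pi))⁻¹ * ∫ x in Set.Iic t, Real.exp (-x ^ 2 / 2)

/-!
Write `W = (∑ ξ(Zᵢ) − n m)/(√n σ)` for the standardized sum. Algebraically,
`(∑ ξ(Zᵢ) + n B − √n z σ̂)/(√n σ) = W − z + δ` with
`δ = √n (B + m)/σ − z (σ̂ − σ)/σ`, and `|δ| ≤ η z + γ` off the two bad events
`{|σ̂ − σ| > η σ}` and `{√n |B + m| > γ σ}`. Off those events the miscoverage event is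
therefore squeezed between `{W > z + (η z + γ)}` and `{W > z − (η z + γ)}`, whose
probabilities are within `Δ` of `1 − Φ(z ± (η z + γ))`; and `Φ` is `1/√(2π)`-Lipschitz.
-/

lemma integrable_exp_neg_sq_div_two : Integrable (fun x : ℝ => exp (-x ^ 2 / 2)) := by
  refine (integrable_exp_neg_mul_sq (by norm_num : (0 : ℝ) < 1 / 2)).congr
    (Filter.Eventually.of_forall fun x => ?_)
  ring_nf

lemma Phi_sub_Phi_le {a b : ℝ} (hab : a ≤ b) :
    Phi b - Phi a ≤ (b - a) / sqrt (2 * π) := by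
  have hint := integrable_exp_neg_sq_div_two
  have hdiff : Phi b - Phi a = (sqrt (2 * π))⁻¹ * ∫ x in a..b, exp (-x ^ 2 / 2) := by
    rw [Phi, Phi, ← mul_sub,
      intervalIntegral.integral_Iic_sub_Iic hint.integrableOn hint.integrableOn]
  have hle : ∫ x in a..b, exp (-x ^ 2 / 2) ≤ b - a :=
    calc ∫ x in a..b, exp (-x ^ 2 / 2) ≤ ∫ _ in a..b, (1 : ℝ) :=
          intervalIntegral.integral_mono_on hab hint.intervalIntegrable
            intervalIntegrable_const fun x _ => exp_le_one_iff.mpr (by nlinarith [sq_nonneg x])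
      _ = b - a := by simp
  rw [hdiff, div_eq_inv_mul]
  gcongr

section Sandwich

variable {Ω : Type*} [MeasurableSpace Ω] {μ : Measure Ω} [IsProbabilityMeasure μ]

lemma measureReal_le_add_one_sub_of_subset_union_compl {A E T : Set Ω}
    (hT : MeasurableSet T) (h : A ⊆ E ∪ Tᶜ) : μ.real A ≤ μ.real E + (1 - μ.real T) := by
  rw [← probReal_compl_eq_one_sub hT]
  exact (measureReal_mono h).trans (measureReal_union_le E Tᶜ)

lemma one_sub_le_measureReal_add_of_compl_subset_union {A E T : Set Ω}
    (h : Tᶜ ⊆ A ∪ E) : 1 - μ.real T ≤ μ.real A + μ.real E := by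
  have hcover : 1 ≤ μ.real T + μ.real Tᶜ := by
    rw [← probReal_univ (μ := μ), ← Set.union_compl_self T]
    exact measureReal_union_le T Tᶜ
  linarith [(measureReal_mono h (measure_ne_top μ _)).trans (measureReal_union_le A E)]

lemma abs_measureReal_sub_one_sub_le {A E : Set Ω} {T : ℝ → Set Ω} {F : ℝ → ℝ}
    {Δ z ε L : ℝ} (hT : ∀ t, MeasurableSet (T t)) (hΔ : ∀ t, |μ.real (T t) - F t| ≤ Δ)
    (hF_lo : F z - F (z - ε) ≤ L) (hF_hi : F (z + ε) - F z ≤ L)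
    (hA_lo : A ⊆ E ∪ (T (z - ε))ᶜ) (hA_hi : (T (z + ε))ᶜ ⊆ A ∪ E) :
    |μ.real A - (1 - F z)| ≤ Δ + μ.real E + L := by
  have hup := measureReal_le_add_one_sub_of_subset_union_compl (μ := μ) (hT (z - ε)) hA_lo
  have hdown := one_sub_le_measureReal_add_of_compl_subset_union (μ := μ) hA_hi
  have hΔ_lo := abs_le.mp (hΔ (z - ε))
  have hΔ_hi := abs_le.mp (hΔ (z + ε))
  rw [abs_le]
  constructor <;> linarith

end Sandwich

section Perturbation

variable {n σ s b m S z η γ : ℝ}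

lemma abs_standardized_sub_studentized_le (hn : 0 < n) (hσ : 0 < σ) (hz : 0 ≤ z)
    (hs : |s - σ| ≤ η * σ) (hb : sqrt n * |b + m| ≤ γ * σ) :
    |(S - n * m) / (sqrt n * σ) - (z + (S + n * b - sqrt n * z * s) / (sqrt n * σ))|
      ≤ η * z + γ := by
  have hc : 0 < sqrt n := sqrt_pos.mpr hn
  have hδ : (S - n * m) / (sqrt n * σ) - (z + (S + n * b - sqrt n * z * s) / (sqrt n * σ))
      = (z * (s - σ) - sqrt n * (b + m)) / σ := by
    field_simp
    linear_combination (b + m) * mul_self_sqrt hn.le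
  have hnum : |z * (s - σ) - sqrt n * (b + m)| ≤ (η * z + γ) * σ :=
    calc |z * (s - σ) - sqrt n * (b + m)| ≤ z * |s - σ| + sqrt n * |b + m| := by
          simpa only [abs_mul, abs_of_nonneg hz, abs_of_pos hc]
            using abs_sub (z * (s - σ)) (sqrt n * (b + m))
      _ ≤ z * (η * σ) + γ * σ := by gcongr
      _ = (η * z + γ) * σ := by ring
  rw [hδ, abs_div, abs_of_pos hσ, div_le_iff₀ hσ]
  exact hnum

lemma sub_lt_standardized_of_studentized_lt (hn : 0 < n) (hσ : 0 < σ) (hz : 0 ≤ z)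
    (hs : |s - σ| ≤ η * σ) (hb : sqrt n * |b + m| ≤ γ * σ)
    (h : sqrt n * z * s < S + n * b) :
    z - (η * z + γ) < (S - n * m) / (sqrt n * σ) := by
  have hpos : 0 < (S + n * b - sqrt n * z * s) / (sqrt n * σ) :=
    div_pos (by linarith) (by positivity)
  linarith [(abs_le.mp (abs_standardized_sub_studentized_le (S := S) hn hσ hz hs hb)).1]

lemma studentized_lt_of_add_lt_standardized (hn : 0 < n) (hσ : 0 < σ) (hz : 0 ≤ z)
    (hs : |s - σ| ≤ η * σ) (hb : sqrt n * |b + m| ≤ γ * σ)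
    (h : z + (η * z + γ) < (S - n * m) / (sqrt n * σ)) :
    sqrt n * z * s < S + n * b := by
  have hpos : 0 < (S + n * b - sqrt n * z * s) / (sqrt n * σ) := by
    linarith [(abs_le.mp (abs_standardized_sub_studentized_le (S := S) hn hσ hz hs hb)).2]
  linarith [(div_pos_iff_of_pos_right (by positivity)).mp hpos]

end Perturbation

theorem bias_corrected_universal_inference_miscoverage_nonasymptotic_general
    {𝒵 : Type*} [MeasurableSpace 𝒵] (G : Measure 𝒵) [IsProbabilityMeasure G]
    (n : ℕ) (hn : 0 < n)
    (ξ : 𝒵 → ℝ) (hξ : Measurable ξ)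
    (m σ : ℝ)
    (hσpos : 0 < σ)
    (Δ : ℝ)
    (hΔ : ∀ t : ℝ, |((Measure.pi fun _ : Fin n => G)
        {ω | ((∑ i, ξ (ω i)) - n * m) / (Real.sqrt n * σ) ≤ t}).toReal - Phi t| ≤ Δ)
    (σhat B : (Fin n → 𝒵) → ℝ)
    (z η γ : ℝ) (hz : 0 ≤ z) (hη : 0 ≤ η) (hγ : 0 ≤ γ) :
    |((Measure.pi fun _ : Fin n => G)
          {ω | Real.sqrt n * z * σhat ω < (∑ i, ξ (ω i)) + n * B ω}).toReal
        - (1 - Phi z)| ≤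
      Δ + ((Measure.pi fun _ : Fin n => G) {ω | η * σ < |σhat ω - σ|}).toReal
        + ((Measure.pi fun _ : Fin n => G)
            {ω | γ * σ < Real.sqrt n * |B ω + m|}).toReal
        + (η * z + γ) / Real.sqrt (2 * Real.pi) := by
  set P := Measure.pi fun _ : Fin n => G
  set ε := η * z + γ
  set A := {ω : Fin n → 𝒵 | sqrt n * z * σhat ω < (∑ i, ξ (ω i)) + n * B ω}
  set E₁ := {ω : Fin n → 𝒵 | η * σ < |σhat ω - σ|}
  set E₂ := {ω : Fin n → 𝒵 | γ * σ < sqrt n * |B ω + m|}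
  set T := fun t : ℝ => {ω : Fin n → 𝒵 | ((∑ i, ξ (ω i)) - n * m) / (sqrt n * σ) ≤ t}
  have hn' : (0 : ℝ) < n := Nat.cast_pos.mpr hn
  have hε : 0 ≤ ε := by positivity
  have hT : ∀ t, MeasurableSet (T t) := fun t => measurableSet_le
    (((Finset.measurable_sum _ fun i _ => hξ.comp (measurable_pi_apply i)).sub_const _).div_const
      _) measurable_const
  have hA_lo : A ⊆ (E₁ ∪ E₂) ∪ (T (z - ε))ᶜ := by
    intro ω hA
    by_contra! hω
    simp only [Set.mem_union, Set.mem_compl_iff, not_or, not_not, Set.mem_ofPred_eq, not_lt,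
      E₁, E₂, T] at hω
    exact (sub_lt_standardized_of_studentized_lt hn' hσpos hz hω.1.1 hω.1.2 hA).not_ge hω.2
  have hA_hi : (T (z + ε))ᶜ ⊆ A ∪ (E₁ ∪ E₂) := by
    intro ω hT
    by_contra! hω
    simp only [Set.mem_union, Set.mem_compl_iff, not_or, Set.mem_ofPred_eq, not_lt, not_le,
      A, E₁, E₂, T] at hω hT
    exact hω.1.not_gt (studentized_lt_of_add_lt_standardized hn' hσpos hz hω.2.1 hω.2.2 hT)
  calc |P.real A - (1 - Phi z)| ≤ Δ + P.real (E₁ ∪ E₂) + ε / sqrt (2 * π) :=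
        abs_measureReal_sub_one_sub_le hT hΔ
          (by simpa only [sub_sub_cancel] using Phi_sub_Phi_le (by linarith : z - ε ≤ z))
          (by simpa only [add_sub_cancel_left] using Phi_sub_Phi_le (by linarith : z ≤ z + ε))
          hA_lo hA_hi
    _ ≤ Δ + P.real E₁ + P.real E₂ + ε / sqrt (2 * π) := by
        linarith [measureReal_union_le (μ := P) E₁ E₂]

/-- Nonasymptotic conditional form underlying Theorem 2: the miscoverage probability of the
studentized and bias-corrected universal confidence set equals `1 − Φ(z)` up to the
Berry–Esseen error `Δ`, the studentization error probability, the double-robustness term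
`P(√n|B + m| > γσ)`, and Gaussian-Lipschitz remainders. The i.i.d. sample `Z₁,…,Z_n ∼ G` is
modelled by the product measure `Measure.pi (fun _ : Fin n => G)`. -/
theorem bias_corrected_universal_inference_miscoverage_nonasymptotic
    {𝒵 : Type*} [MeasurableSpace 𝒵] (G : Measure 𝒵) [IsProbabilityMeasure G]
    (n : ℕ) (hn : 0 < n)
    (ξ : 𝒵 → ℝ) (hξ : Measurable ξ)
    (m σ : ℝ) (hm : m = ∫ z, ξ z ∂G)
    (hξ2 : Integrable (fun z => (ξ z) ^ 2) G)
    (hσ : σ ^ 2 = variance ξ G) (hσpos : 0 < σ)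
    (Δ : ℝ)
    (hΔ : ∀ t : ℝ, |((Measure.pi fun _ : Fin n => G)
        {ω | ((∑ i, ξ (ω i)) - n * m) / (Real.sqrt n * σ) ≤ t}).toReal - Phi t| ≤ Δ)
    (σhat B : (Fin n → 𝒵) → ℝ) (hσhat : Measurable σhat) (hB : Measurable B)
    (hσhat0 : ∀ ω, 0 ≤ σhat ω)
    (z η γ : ℝ) (hz : 0 ≤ z) (hη : 0 ≤ η) (hγ : 0 ≤ γ) :
    |((Measure.pi fun _ : Fin n => G)
          {ω | Real.sqrt n * z * σhat ω < (∑ i, ξ (ω i)) + n * B ω}).toReal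
        - (1 - Phi z)| ≤
      Δ + ((Measure.pi fun _ : Fin n => G) {ω | η * σ < |σhat ω - σ|}).toReal
        + ((Measure.pi fun _ : Fin n => G)
            {ω | γ * σ < Real.sqrt n * |B ω + m|}).toReal
        + (η * z + γ) / Real.sqrt (2 * Real.pi) :=
  bias_corrected_universal_inference_miscoverage_nonasymptotic_general G n hn ξ hξ m σ hσpos Δ hΔ
    σhat B z η γ hz hη hγ
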